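/- arXiv:1907.01799 — 3 statements merged into one kernel-verified Lean document; each statement's English description precedes it below -/
import Mathlib

section
/- Let μ ∈ ℕ be positive and ν = 1, and let Ψ^{μ,1} be the 2×2 matrix with rows (1+μα, μβ) and (γ·Σ_{i=0}^{μ-1}(1+δ)^i, (1+δ)^μ). If every complex eigenvalue of Ψ^{μ,1} has modulus strictly less than 1, then the origin is globally asymptotically stable: every solution (x, y) of the (μ,1)-asynchronous system satisfies x(nμ) → 0 as n → ∞ and y(n) → 0 as n → ∞. -/
/-!
Sampled at the multiples of `μ`, the solution evolves linearly: `x` is frozen at `x(n)` during one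
period, so `y` follows an affine recursion whose solution over the period is
`y(nμ + r) = (1 + δ)^r y(nμ) + γ (∑_{j<r} (1 + δ)^j) x(n)`, and `(x(n), y(nμ))` is mapped to
`(x(n+1), y((n+1)μ))` by `Ψ^{μ,1} = asyncMatrix μ α β γ δ`. By Gelfand's formula the spectral
hypothesis gives `‖(Ψ^{μ,1})^N‖ < 1` for some `N`, hence `(Ψ^{μ,1})^n → 0`, so the samples tend
to `0`; the formula for `y(nμ + r)` then gives `y → 0` along every residue class mod `μ`.
-/

open Filter Topology Matrix

/-- `(x, y)` is a solution of the `(μ,ν)`-asynchronous system, where `x n` stands for the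
value at time `n·μ ∈ 𝕋_μ` and `y n` for the value at time `n·ν ∈ 𝕋_ν`. -/
def IsAsyncSol (μ ν α β γ δ : ℝ) (x y : ℕ → ℝ) : Prop :=
  (∀ n : ℕ, x (n + 1) = (1 + μ * α) * x n + μ * β * y ⌊(n : ℝ) * μ / ν⌋₊) ∧
  (∀ n : ℕ, y (n + 1) = ν * γ * x ⌊(n : ℝ) * ν / μ⌋₊ + (1 + ν * δ) * y n)

theorem tendsto_of_tendsto_comp_mul_add {α : Type*} {l : Filter α} {f : ℕ → α} {k : ℕ}
    (hk : 0 < k) (h : ∀ r < k, Tendsto (fun n ↦ f (n * k + r)) atTop l) :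
    Tendsto f atTop l := by
  intro s hs
  show ∀ᶠ m in atTop, f m ∈ s
  have hev : ∀ᶠ n in atTop, ∀ r ∈ Finset.range k, f (n * k + r) ∈ s :=
    (eventually_all_finset _).2 fun r hr ↦ h r (Finset.mem_range.1 hr) hs
  filter_upwards [(Nat.tendsto_div_const_atTop hk.ne').eventually hev] with m hm
  simpa [Nat.div_add_mod'] using hm (m % k) (Finset.mem_range.2 (Nat.mod_lt m hk))

theorem tendsto_pow_nhds_zero_of_forall_spectrum_norm_lt_one {A : Type*} [NormedRing A]
    [NormedAlgebra ℂ A] [CompleteSpace A] [Nontrivial A] {a : A}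
    (h : ∀ z ∈ spectrum ℂ a, ‖z‖ < 1) : Tendsto (a ^ ·) atTop (𝓝 0) := by
  have hρ : spectralRadius ℂ a < 1 := by
    simpa using spectrum.spectralRadius_lt_of_forall_lt a (r := 1) fun z hz ↦ mod_cast h z hz
  obtain ⟨N, hN, hN1⟩ : ∃ N, 0 < N ∧ ‖a ^ N‖ < 1 := by
    obtain ⟨N, hN⟩ := ((spectrum.pow_nnnorm_pow_one_div_tendsto_nhds_spectralRadius a).eventually
      (gt_mem_nhds hρ) |>.and (eventually_gt_atTop 0)).exists
    refine ⟨N, hN.2, ?_⟩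
    by_contra! hge
    exact hN.1.not_ge (ENNReal.one_le_rpow (by exact_mod_cast hge) (by have := hN.2; positivity))
  refine tendsto_of_tendsto_comp_mul_add hN fun r _ ↦ ?_
  simpa [pow_add, pow_mul'] using (tendsto_pow_atTop_nhds_zero_of_norm_lt_one hN1).mul_const (a ^ r)

theorem Matrix.tendsto_pow_nhds_zero_of_forall_spectrum_map_ofReal {n : Type*} [Fintype n]
    [DecidableEq n] [Nonempty n] {M : Matrix n n ℝ}
    (h : ∀ z ∈ spectrum ℂ (M.map Complex.ofReal), ‖z‖ < 1) : Tendsto (M ^ ·) atTop (𝓝 0) := by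
  let := Matrix.linftyOpNormedRing (n := n) (α := ℂ)
  let := Matrix.linftyOpNormedAlgebra (n := n) (R := ℂ) (α := ℂ)
  have hre : Continuous fun N : Matrix n n ℂ ↦ N.map Complex.re :=
    continuous_id.matrix_map Complex.continuous_re
  have := (hre.tendsto 0).comp (tendsto_pow_nhds_zero_of_forall_spectrum_norm_lt_one h)
  have hpow (k : ℕ) : (M.map Complex.ofReal ^ k).map Complex.re = M ^ k := by
    rw [show M.map Complex.ofReal = M.map Complex.ofRealHom from rfl, ← Matrix.map_pow,
      Matrix.map_map]
    ext; simp
  simpa [Function.comp_def, hpow] using this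

def asyncMatrix (μ : ℕ) (α β γ δ : ℝ) : Matrix (Fin 2) (Fin 2) ℝ :=
  !![1 + (μ : ℝ) * α, (μ : ℝ) * β; γ * ∑ i ∈ Finset.range μ, (1 + δ) ^ i, (1 + δ) ^ μ]

namespace IsAsyncSol

variable {μ : ℕ} {α β γ δ : ℝ} {x y : ℕ → ℝ}

theorem x_succ (h : IsAsyncSol μ 1 α β γ δ x y) (n : ℕ) :
    x (n + 1) = (1 + μ * α) * x n + μ * β * y (n * μ) := by
  simpa [← Nat.cast_mul] using h.1 n

theorem y_succ (h : IsAsyncSol μ 1 α β γ δ x y) (n : ℕ) :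
    y (n + 1) = γ * x (n / μ) + (1 + δ) * y n := by
  simpa [Nat.floor_div_natCast] using h.2 n

theorem y_mul_add (h : IsAsyncSol μ 1 α β γ δ x y) (n : ℕ) {i : ℕ} (hi : i ≤ μ) :
    y (n * μ + i) = (1 + δ) ^ i * y (n * μ) + γ * (∑ j ∈ Finset.range i, (1 + δ) ^ j) * x n := by
  induction i with
  | zero => simp
  | succ i ih =>
    have hdiv : (n * μ + i) / μ = n := by
      rw [mul_comm, Nat.mul_add_div (by omega), Nat.div_eq_of_lt (by omega), add_zero]
    rw [← add_assoc, h.y_succ, hdiv, ih (by omega), geom_sum_succ]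
    ring

theorem sample_succ (h : IsAsyncSol μ 1 α β γ δ x y) (n : ℕ) :
    ![x (n + 1), y ((n + 1) * μ)] = asyncMatrix μ α β γ δ *ᵥ ![x n, y (n * μ)] := by
  have hy : y ((n + 1) * μ) = y (n * μ + μ) := by rw [add_one_mul]
  ext i
  fin_cases i
  · simp [asyncMatrix, h.x_succ]
    ring
  · simp [asyncMatrix, hy, h.y_mul_add n le_rfl]
    ring

theorem sample_eq_pow_mulVec (h : IsAsyncSol μ 1 α β γ δ x y) (n : ℕ) :
    ![x n, y (n * μ)] = asyncMatrix μ α β γ δ ^ n *ᵥ ![x 0, y 0] := by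
  induction n with
  | zero => simp
  | succ n ih => rw [h.sample_succ, ih, Matrix.mulVec_mulVec, pow_succ']

end IsAsyncSol

theorem stmt9 (μ : ℕ) (hμ : 0 < μ) (α β γ δ : ℝ)
    (hspec : ∀ z ∈ spectrum ℂ
        ((!![1 + (μ : ℝ) * α, (μ : ℝ) * β;
             γ * ∑ i ∈ Finset.range μ, (1 + δ) ^ i, (1 + δ) ^ μ]).map Complex.ofReal),
      ‖z‖ < 1)
    (x y : ℕ → ℝ) (hxy : IsAsyncSol (μ : ℝ) 1 α β γ δ x y) :
    Filter.Tendsto x Filter.atTop (nhds 0) ∧ Filter.Tendsto y Filter.atTop (nhds 0) := by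
  have hΨ : Tendsto (asyncMatrix μ α β γ δ ^ ·) atTop (𝓝 0) :=
    Matrix.tendsto_pow_nhds_zero_of_forall_spectrum_map_ofReal hspec
  have hsample : Tendsto (fun n ↦ ![x n, y (n * μ)]) atTop (𝓝 0) := by
    have := ((continuous_id.matrix_mulVec (continuous_const (y := ![x 0, y 0]))).tendsto 0).comp hΨ
    simp only [hxy.sample_eq_pow_mulVec]
    simpa only [Function.comp_def, id, Matrix.zero_mulVec] using this
  have hx : Tendsto x atTop (𝓝 0) := by
    simpa using tendsto_pi_nhds.1 hsample 0
  have hy : Tendsto (fun n ↦ y (n * μ)) atTop (𝓝 0) := by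
    simpa using tendsto_pi_nhds.1 hsample 1
  refine ⟨hx, tendsto_of_tendsto_comp_mul_add hμ fun r hr ↦ ?_⟩
  simpa [hxy.y_mul_add _ hr.le] using
    (hy.const_mul ((1 + δ) ^ r)).add (hx.const_mul (γ * ∑ j ∈ Finset.range r, (1 + δ) ^ j))
end

section
/- Consider the parameters α = -1/11, β = 1/10, γ = -2/15, δ = 1/15 and μ = 3. The synchronous 3-step matrix Ψ^{3,3} with rows (8/11, 3/10) and (-2/5, 6/5) has every complex eigenvalue of modulus strictly less than 1, while the asynchronous 3-step matrix Ψ^{3,1} with rows (8/11, 3/10) and (-1442/3375, 4096/3375) has every complex eigenvalue of modulus strictly greater than 1; in particular asymptotic stability of the synchronous (3,3)-dynamics does not imply asymptotic stability of the (3,1)-asynchronous dynamics with the same parameters. -/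
/-!
A real `2 × 2` matrix with `trace ^ 2 < 4 * det` has two complex conjugate eigenvalues, so both
have squared modulus equal to their product, the determinant. Both matrices satisfy this
discriminant condition, and `det Ψ^{3,3} = 273/275 < 1` while `det Ψ^{3,1} = 187633/185625 > 1`.
-/

open Polynomial in
theorem Matrix.sq_sub_trace_mul_add_det_eq_zero_of_mem_spectrum {K : Type*} [Field K]
    {A : Matrix (Fin 2) (Fin 2) K} {z : K} (hz : z ∈ spectrum K A) :
    z ^ 2 - A.trace * z + A.det = 0 := by
  rw [Matrix.mem_spectrum_iff_isRoot_charpoly, Matrix.charpoly_fin_two] at hz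
  simpa using hz

theorem Complex.sq_norm_eq_of_sq_sub_mul_add_eq_zero {t d : ℝ} (hdisc : t ^ 2 < 4 * d) {z : ℂ}
    (hz : z ^ 2 - t * z + d = 0) : ‖z‖ ^ 2 = d := by
  have hre := congrArg Complex.re hz
  have him := congrArg Complex.im hz
  simp only [pow_two, sub_re, add_re, mul_re, ofReal_re, ofReal_im, sub_im, add_im, mul_im,
    zero_re, zero_im] at hre him
  have him_ne : z.im ≠ 0 := by
    intro h
    rw [h] at hre
    nlinarith [sq_nonneg (2 * z.re - t)]
  -- the imaginary part of the equation reads `z.im * (2 * z.re - t) = 0`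
  have hre_eq : z.re * (2 * z.re - t) = 0 := by
    have : z.im * (2 * z.re - t) = 0 := by linarith
    rw [(mul_eq_zero.mp this).resolve_left him_ne, mul_zero]
  rw [Complex.sq_norm, Complex.normSq_apply]
  linarith

theorem Matrix.sq_norm_eq_det_of_mem_spectrum_map_ofReal {A : Matrix (Fin 2) (Fin 2) ℝ}
    (hdisc : A.trace ^ 2 < 4 * A.det) {z : ℂ} (hz : z ∈ spectrum ℂ (A.map Complex.ofReal)) :
    ‖z‖ ^ 2 = A.det := by
  refine Complex.sq_norm_eq_of_sq_sub_mul_add_eq_zero hdisc ?_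
  simpa [Matrix.trace_fin_two, Matrix.det_fin_two] using
    Matrix.sq_sub_trace_mul_add_det_eq_zero_of_mem_spectrum hz

/-- Parameters `α = -1/11`, `β = 1/10`, `γ = -2/15`, `δ = 1/15`, `μ = 3`:
the synchronous matrix `Ψ^{3,3} = I + 3P` has all eigenvalues of modulus `< 1`,
while the asynchronous matrix `Ψ^{3,1}` has all eigenvalues of modulus `> 1`. -/
theorem stmt11 :
    (!![1 + 3 * (-1/11 : ℝ), 3 * (1/10); 3 * (-2/15), 1 + 3 * (1/15)] =
        !![(8 : ℝ)/11, 3/10; -2/5, 6/5]) ∧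
    (∀ z ∈ spectrum ℂ ((!![(8 : ℝ)/11, 3/10; -2/5, 6/5]).map Complex.ofReal),
      ‖z‖ < 1) ∧
    (!![1 + 3 * (-1/11 : ℝ), 3 * (1/10);
        (-2/15) * ∑ i ∈ Finset.range 3, (1 + (1/15 : ℝ)) ^ i, (1 + (1/15 : ℝ)) ^ 3] =
        !![(8 : ℝ)/11, 3/10; -1442/3375, 4096/3375]) ∧
    (∀ z ∈ spectrum ℂ ((!![(8 : ℝ)/11, 3/10; -1442/3375, 4096/3375]).map Complex.ofReal),
      1 < ‖z‖) := by
  refine ⟨by norm_num [← Matrix.ext_iff], fun z hz ↦ ?_,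
    by norm_num [← Matrix.ext_iff, Finset.sum_range_succ], fun z hz ↦ ?_⟩
  · have hnorm := Matrix.sq_norm_eq_det_of_mem_spectrum_map_ofReal
      (by norm_num [Matrix.trace_fin_two, Matrix.det_fin_two]) hz
    rw [Matrix.det_fin_two_of] at hnorm
    exact (sq_lt_one_iff₀ (norm_nonneg z)).mp (by rw [hnorm]; norm_num)
  · have hnorm := Matrix.sq_norm_eq_det_of_mem_spectrum_map_ofReal
      (by norm_num [Matrix.trace_fin_two, Matrix.det_fin_two]) hz
    rw [Matrix.det_fin_two_of] at hnorm
    exact (one_lt_sq_iff₀ (norm_nonneg z)).mp (by rw [hnorm]; norm_num)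
end

section
/- Let μ, ν ∈ ℕ be positive, let T := lcm(μ, ν), and let M ∈ ℝ^{2×2} be the T-step solution operator of the (μ,ν)-asynchronous system. If every complex eigenvalue of M has modulus strictly less than 1, then the origin is globally asymptotically stable: every solution (x, y) of the (μ,ν)-asynchronous system satisfies x(nμ) → 0 and y(nν) → 0 as n → ∞. -/
/-- `M` is the `T`-step solution operator (`T = lcm(μ,ν)`): every solution satisfies
`(x(t+T), y(t+T))ᵀ = M (x(t), y(t))ᵀ` for all `t ∈ 𝕋_T`. At time `t = mT`, `x` has index
`m·(T/μ)` and `y` has index `m·(T/ν)`. -/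
def IsTStepOp (μ ν : ℕ) (α β γ δ : ℝ) (M : Matrix (Fin 2) (Fin 2) ℝ) : Prop :=
  ∀ x y : ℕ → ℝ, IsAsyncSol (μ : ℝ) (ν : ℝ) α β γ δ x y →
    ∀ m : ℕ,
      ![x ((m + 1) * (Nat.lcm μ ν / μ)), y ((m + 1) * (Nat.lcm μ ν / ν))] =
        M.mulVec ![x (m * (Nat.lcm μ ν / μ)), y (m * (Nat.lcm μ ν / ν))]

/-! Over one period `T = lcm(μ, ν)` the states at the period starts evolve by
`(x(mT), y(mT)) = Mᵐ (x 0, y 0)`, and `Mᵐ → 0` by Gelfand's formula since the spectral radius of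
`M` is below `1`. Inside a period each update multiplies a common bound on both components by at
most a constant `c`, so every value in the period starting at `mT` is at most `c ^ T` times the
state at `mT`, and hence also tends to `0`. -/

open Filter Topology

theorem tendsto_pow_atTop_nhds_zero_of_spectralRadius_lt_one {A : Type*} [NormedRing A]
    [NormedAlgebra ℂ A] [CompleteSpace A] {a : A} (ha : spectralRadius ℂ a < 1) :
    Tendsto (a ^ ·) atTop (𝓝 0) := by
  obtain ⟨r, hρr, hr1⟩ := ENNReal.lt_iff_exists_nnreal_btwn.mp ha
  -- Gelfand's formula: eventually `‖a ^ n‖ ^ (1 / n) < r`.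
  have hbound : ∀ᶠ n : ℕ in atTop, ‖a ^ n‖ ≤ (r : ℝ) ^ n := by
    have hgelfand := spectrum.pow_nnnorm_pow_one_div_tendsto_nhds_spectralRadius a
    filter_upwards [hgelfand.eventually_lt_const hρr, eventually_ge_atTop 1] with n hn hn1
    rw [one_div, ENNReal.rpow_inv_lt_iff (by positivity), ENNReal.rpow_natCast] at hn
    exact_mod_cast hn.le
  exact squeeze_zero_norm' hbound (tendsto_pow_atTop_nhds_zero_of_lt_one r.2 (mod_cast hr1))

namespace Matrix

theorem eq_pow_mulVec_of_succ {m : Type*} [Fintype m] [DecidableEq m] {R : Type*}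
    [CommSemiring R] (M : Matrix m m R) {v : ℕ → m → R} (hv : ∀ k, v (k + 1) = M *ᵥ v k)
    (k : ℕ) : v k = (M ^ k) *ᵥ v 0 := by
  induction k with
  | zero => simp
  | succ k ih => rw [hv, ih, mulVec_mulVec, ← pow_succ']

variable {n : Type*} [Fintype n] [DecidableEq n] [Nonempty n]

section
attribute [local instance] Matrix.linftyOpNormedRing Matrix.linftyOpNormedAlgebra

-- Any submultiplicative norm will do; this one induces the product topology of `Matrix`.
theorem tendsto_pow_atTop_nhds_zero_of_norm_spectrum_lt_one {A : Matrix n n ℂ}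
    (hA : ∀ z ∈ spectrum ℂ A, ‖z‖ < 1) : Tendsto (A ^ ·) atTop (𝓝 0) :=
  tendsto_pow_atTop_nhds_zero_of_spectralRadius_lt_one <| by
    simpa using spectrum.spectralRadius_lt_of_forall_lt A (r := 1) fun z hz => mod_cast hA z hz

end

theorem tendsto_pow_atTop_nhds_zero_of_norm_spectrum_map_ofReal_lt_one {M : Matrix n n ℝ}
    (hM : ∀ z ∈ spectrum ℂ (M.map Complex.ofReal), ‖z‖ < 1) : Tendsto (M ^ ·) atTop (𝓝 0) := by
  have hre : Continuous fun A : Matrix n n ℂ => A.map Complex.re :=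
    continuous_id.matrix_map Complex.continuous_re
  have h := (hre.tendsto 0).comp (tendsto_pow_atTop_nhds_zero_of_norm_spectrum_lt_one hM)
  refine h.congr fun m => ?_
  rw [Function.comp_apply, show M.map Complex.ofReal = M.map Complex.ofRealHom from rfl,
    ← Matrix.map_pow, map_map]
  ext i j
  simp

end Matrix

theorem tendsto_nhds_zero_of_abs_block_le {u w : ℕ → ℝ} {K : ℕ} (hK : 0 < K) {C : ℝ}
    (hw : Tendsto w atTop (𝓝 0)) (hu : ∀ m i, i < K → |u (m * K + i)| ≤ C * w m) :
    Tendsto u atTop (𝓝 0) := by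
  have hCw : Tendsto (fun n => C * w (n / K)) atTop (𝓝 0) := by
    simpa using (hw.comp (Nat.tendsto_div_const_atTop hK.ne')).const_mul C
  refine squeeze_zero_norm (fun n => ?_) hCw
  simpa only [Real.norm_eq_abs, Nat.div_add_mod'] using hu (n / K) (n % K) (Nat.mod_lt n hK)

theorem IsAsyncSol.swap {μ ν α β γ δ : ℝ} {x y : ℕ → ℝ} (h : IsAsyncSol μ ν α β γ δ x y) :
    IsAsyncSol ν μ δ γ β α y x :=
  ⟨fun n => (h.2 n).trans (add_comm _ _), fun n => (h.1 n).trans (add_comm _ _)⟩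

theorem Nat.floor_natCast_mul_div_natCast (n μ ν : ℕ) : ⌊(n : ℝ) * μ / ν⌋₊ = n * μ / ν := by
  rw [← Nat.cast_mul, Nat.floor_div_eq_div]

theorem isAsyncSol_natCast_iff {μ ν : ℕ} {α β γ δ : ℝ} {x y : ℕ → ℝ} :
    IsAsyncSol μ ν α β γ δ x y ↔
      (∀ n, x (n + 1) = (1 + μ * α) * x n + μ * β * y (n * μ / ν)) ∧
      (∀ n, y (n + 1) = ν * γ * x (n * ν / μ) + (1 + ν * δ) * y n) := by
  simp only [IsAsyncSol, Nat.floor_natCast_mul_div_natCast]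

namespace IsAsyncSol

variable {μ ν : ℕ} {α β γ δ : ℝ} {x y : ℕ → ℝ}

theorem shift (h : IsAsyncSol μ ν α β γ δ x y) (hμ : 0 < μ) (hν : 0 < ν) {k l : ℕ}
    (hkl : k * μ = l * ν) : IsAsyncSol μ ν α β γ δ (fun n => x (k + n)) (fun n => y (l + n)) := by
  rw [isAsyncSol_natCast_iff] at h ⊢
  refine ⟨fun n => ?_, fun n => ?_⟩
  · rw [← add_assoc, h.1, add_mul k, hkl, mul_comm l, Nat.mul_add_div hν]
  · rw [← add_assoc, h.2, add_mul l, ← hkl, mul_comm k, Nat.mul_add_div hμ]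

theorem abs_succ_le (h : IsAsyncSol μ ν α β γ δ x y) {c B : ℝ} (hc : |1 + μ * α| + |μ * β| ≤ c)
    {n : ℕ} (hx : |x n| ≤ B) (hy : |y (n * μ / ν)| ≤ B) : |x (n + 1)| ≤ c * B := by
  have hB : 0 ≤ B := (abs_nonneg _).trans hx
  rw [(isAsyncSol_natCast_iff.mp h).1]
  calc |(1 + μ * α) * x n + μ * β * y (n * μ / ν)|
      ≤ |1 + μ * α| * |x n| + |μ * β| * |y (n * μ / ν)| := by
        rw [← abs_mul, ← abs_mul]; exact abs_add_le _ _
    _ ≤ (|1 + μ * α| + |μ * β|) * B := by rw [add_mul]; gcongr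
    _ ≤ c * B := by gcongr

theorem abs_le_pow_mul_succ (h : IsAsyncSol μ ν α β γ δ x y) (hμ : 0 < μ) {c W : ℝ}
    (hc1 : 1 ≤ c) (hc : |1 + μ * α| + |μ * β| ≤ c) (hx0 : |x 0| ≤ W) {t : ℕ}
    (hx : ∀ n, n * μ ≤ t → |x n| ≤ c ^ t * W) (hy : ∀ n, n * ν ≤ t → |y n| ≤ c ^ t * W) :
    ∀ n, n * μ ≤ t + 1 → |x n| ≤ c ^ (t + 1) * W
  | 0, _ => hx0.trans (le_mul_of_one_le_left ((abs_nonneg _).trans hx0) (one_le_pow₀ hc1))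
  | i + 1, hi => by
    have hit : i * μ ≤ t := by rw [add_mul, one_mul] at hi; omega
    rw [pow_succ', mul_assoc]
    exact h.abs_succ_le hc (hx i hit) (hy _ ((Nat.div_mul_le_self _ _).trans hit))

theorem abs_le_pow_mul (h : IsAsyncSol μ ν α β γ δ x y) (hμ : 0 < μ) (hν : 0 < ν) {c W : ℝ}
    (hc1 : 1 ≤ c) (hcx : |1 + μ * α| + |μ * β| ≤ c) (hcy : |ν * γ| + |1 + ν * δ| ≤ c)
    (hx0 : |x 0| ≤ W) (hy0 : |y 0| ≤ W) :
    ∀ t, (∀ n, n * μ ≤ t → |x n| ≤ c ^ t * W) ∧ (∀ n, n * ν ≤ t → |y n| ≤ c ^ t * W)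
  | 0 => by
    refine ⟨fun n hn => ?_, fun n hn => ?_⟩ <;>
    · obtain rfl : n = 0 := by simpa [hμ.ne', hν.ne'] using hn
      simpa
  | t + 1 => by
    obtain ⟨hx, hy⟩ := abs_le_pow_mul h hμ hν hc1 hcx hcy hx0 hy0 t
    exact ⟨h.abs_le_pow_mul_succ hμ hc1 hcx hx0 hx hy,
      h.swap.abs_le_pow_mul_succ hν hc1 (by rwa [add_comm]) hy0 hy hx⟩

theorem abs_le_of_period (h : IsAsyncSol μ ν α β γ δ x y) (hμ : 0 < μ) (hν : 0 < ν) {c : ℝ}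
    (hc1 : 1 ≤ c) (hcx : |1 + μ * α| + |μ * β| ≤ c) (hcy : |ν * γ| + |1 + ν * δ| ≤ c)
    {T K L : ℕ} (hK : K * μ = T) (hL : L * ν = T) (m i : ℕ) :
    (i ≤ K → |x (m * K + i)| ≤ c ^ T * max |x (m * K)| |y (m * L)|) ∧
    (i ≤ L → |y (m * L + i)| ≤ c ^ T * max |x (m * K)| |y (m * L)|) := by
  have hshift := h.shift hμ hν (k := m * K) (l := m * L) (by rw [mul_assoc, mul_assoc, hK, hL])
  obtain ⟨hx, hy⟩ := hshift.abs_le_pow_mul hμ hν hc1 hcx hcy (W := max |x (m * K)| |y (m * L)|)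
    (by simp only [add_zero]; exact le_max_left _ _)
    (by simp only [add_zero]; exact le_max_right _ _) T
  exact ⟨fun hi => hx i (hK ▸ Nat.mul_le_mul_right μ hi),
    fun hi => hy i (hL ▸ Nat.mul_le_mul_right ν hi)⟩

end IsAsyncSol

theorem IsTStepOp.tendsto_max_abs {μ ν : ℕ} {α β γ δ : ℝ} {M : Matrix (Fin 2) (Fin 2) ℝ}
    (hM : IsTStepOp μ ν α β γ δ M) (hspec : ∀ z ∈ spectrum ℂ (M.map Complex.ofReal), ‖z‖ < 1)
    {x y : ℕ → ℝ} (hxy : IsAsyncSol μ ν α β γ δ x y) :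
    Tendsto (fun m => max |x (m * (Nat.lcm μ ν / μ))| |y (m * (Nat.lcm μ ν / ν))|) atTop (𝓝 0) := by
  set v : ℕ → Fin 2 → ℝ := fun m => ![x (m * (Nat.lcm μ ν / μ)), y (m * (Nat.lcm μ ν / ν))]
  have hv : Tendsto v atTop (𝓝 0) := by
    rw [funext (M.eq_pow_mulVec_of_succ (v := v) (hM x y hxy))]
    exact ((continuous_id.matrix_mulVec continuous_const).tendsto' _ _ (Matrix.zero_mulVec _)).comp
      (Matrix.tendsto_pow_atTop_nhds_zero_of_norm_spectrum_map_ofReal_lt_one hspec)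
  simpa [v] using (tendsto_pi_nhds.mp hv 0).abs.max (tendsto_pi_nhds.mp hv 1).abs

theorem stmt14 (μ ν : ℕ) (hμ : 0 < μ) (hν : 0 < ν) (α β γ δ : ℝ)
    (M : Matrix (Fin 2) (Fin 2) ℝ) (hM : IsTStepOp μ ν α β γ δ M)
    (hspec : ∀ z ∈ spectrum ℂ (M.map Complex.ofReal), ‖z‖ < 1)
    (x y : ℕ → ℝ) (hxy : IsAsyncSol (μ : ℝ) (ν : ℝ) α β γ δ x y) :
    Filter.Tendsto x Filter.atTop (nhds 0) ∧ Filter.Tendsto y Filter.atTop (nhds 0) := by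
  have hT : 0 < Nat.lcm μ ν := Nat.lcm_pos hμ hν
  have hK := Nat.div_mul_cancel (Nat.dvd_lcm_left μ ν)
  have hL := Nat.div_mul_cancel (Nat.dvd_lcm_right μ ν)
  have hK0 : 0 < Nat.lcm μ ν / μ := Nat.div_pos (Nat.le_of_dvd hT (Nat.dvd_lcm_left μ ν)) hμ
  have hL0 : 0 < Nat.lcm μ ν / ν := Nat.div_pos (Nat.le_of_dvd hT (Nat.dvd_lcm_right μ ν)) hν
  set c : ℝ := max 1 (max (|1 + μ * α| + |μ * β|) (|ν * γ| + |1 + ν * δ|))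
  have hbound := hxy.abs_le_of_period hμ hν (c := c) (le_max_left _ _)
    ((le_max_left _ _).trans (le_max_right _ _)) ((le_max_right _ _).trans (le_max_right _ _)) hK hL
  have hW := hM.tendsto_max_abs hspec hxy
  exact ⟨tendsto_nhds_zero_of_abs_block_le hK0 hW fun m i hi => (hbound m i).1 hi.le,
    tendsto_nhds_zero_of_abs_block_le hL0 hW fun m i hi => (hbound m i).2 hi.le⟩
end
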